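/- arXiv:1011.2244 — 2 statements merged into one kernel-verified Lean document; each statement's English description precedes it below -/
import Mathlib

section
/- For every continuous ℤ^d-periodic function u : ℝ^d → ℝ, sup_{x ∈ ℝ^d} |T̃^a_t u(x) − u(x)| → 0 as t → 0⁺; that is, T̃^a_t u converges uniformly to u as t tends to 0 from the right. -/
open Set Filter

noncomputable section

/-- Euclidean space `ℝ^d`. -/
abbrev Ed (d : ℕ) := EuclideanSpace ℝ (Fin d)

/-- The vector in `ℝ^d` with integer coordinates `k`. -/
def intVec (d : ℕ) (k : Fin d → ℤ) : Ed d := WithLp.toLp 2 (fun i => (k i : ℝ))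

/-- `u : ℝ^d → ℝ` is `ℤ^d`-periodic. -/
def IsZdPeriodic {d : ℕ} (u : Ed d → ℝ) : Prop :=
  ∀ (x : Ed d) (k : Fin d → ℤ), u (x + intVec d k) = u x

/-- `γ` is continuous and piecewise `C¹` on `[a, b]`. -/
def PiecewiseC1On {d : ℕ} (γ : ℝ → Ed d) (a b : ℝ) : Prop :=
  ContinuousOn γ (Set.Icc a b) ∧
  ∃ (n : ℕ) (T : Fin (n + 1) → ℝ), T 0 = a ∧ T (Fin.last n) = b ∧ Monotone T ∧
    ∀ i : Fin n, ContDiffOn ℝ 1 γ (Set.Icc (T i.castSucc) (T i.succ))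

/-- The standing hypotheses on the autonomous Tonelli Lagrangian `La`:
`C²` smoothness, `ℤ^d`-periodicity in `x`, positive definiteness of the Hessian
`∂²La/∂v²`, and superlinear growth in `v`. -/
def TonelliAut {d : ℕ} (La : Ed d → Ed d → ℝ) : Prop :=
  ContDiff ℝ 2 (fun p : Ed d × Ed d => La p.1 p.2) ∧
  (∀ (x v : Ed d) (k : Fin d → ℤ), La (x + intVec d k) v = La x v) ∧
  (∀ x v w : Ed d, w ≠ 0 → 0 < iteratedFDeriv ℝ 2 (fun v' => La x v') v ![w, w]) ∧
  (∀ A : ℝ, 0 ≤ A → ∃ B : ℝ, ∀ x v : Ed d, A * ‖v‖ - B ≤ La x v)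

/-- The action of the curve `γ : [a,b] → ℝ^d` for the autonomous Lagrangian `La`. -/
def actionA {d : ℕ} (La : Ed d → Ed d → ℝ) (γ : ℝ → Ed d) (a b : ℝ) : ℝ :=
  ∫ s in a..b, La (γ s) (deriv γ s)

/-- The Lax–Oleinik semigroup `Tᵃ_t u (x)`: `Tᵃ_0 u = u` and, for `t > 0`, the infimum of
`u(γ(0)) + ∫₀^t La(γ,γ') ds` over continuous piecewise `C¹` curves ending at `x`. -/
def LOa {d : ℕ} (La : Ed d → Ed d → ℝ) (u : Ed d → ℝ) (t : ℝ) (x : Ed d) : ℝ :=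
  if t = 0 then u x
  else sInf {r | ∃ γ : ℝ → Ed d, PiecewiseC1On γ 0 t ∧ γ t = x ∧
    r = u (γ 0) + actionA La γ 0 t}

/-- The new Lax–Oleinik operator `T̃ᵃ_t u (x) = inf_{σ ∈ [t,2t]} Tᵃ_σ u (x)`. -/
def LOnew {d : ℕ} (La : Ed d → Ed d → ℝ) (u : Ed d → ℝ) (t : ℝ) (x : Ed d) : ℝ :=
  sInf {r | ∃ σ : ℝ, t ≤ σ ∧ σ ≤ 2 * t ∧ r = LOa La u σ x}

/-!
Superlinearity gives `La x v ≥ A ‖v‖ - B`, so a curve from `y` to `x` in time `σ` has action at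
least `A ‖x - y‖ - B σ`. Let `r` be a modulus of uniform continuity of `u` for `ε` and
`M = sup |u|`; with `A = 2M / r` a curve moving further than `r` pays more than the oscillation
`2M` of `u`, so `Tᵃ_σ u ≥ u - ε - B σ`. The constant curve gives `Tᵃ_σ u ≤ u + σ sup La(·, 0)`.
Both bounds pass to the infimum over `σ ∈ [t, 2t]` defining `T̃ᵃ_t u`.
-/

open MeasureTheory Topology

def cube (d : ℕ) (a b : ℝ) : Set (Ed d) := {y | ∀ i, y i ∈ Icc a b}

lemma isCompact_cube (d : ℕ) (a b : ℝ) : IsCompact (cube d a b) := by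
  have : cube d a b =
      (EuclideanSpace.equiv (Fin d) ℝ).toHomeomorph ⁻¹' univ.pi fun _ => Icc a b := by
    ext y
    simp [cube, Pi.le_def, forall_and]
  rw [this, Homeomorph.isCompact_preimage]
  exact isCompact_univ_pi fun _ => isCompact_Icc

lemma exists_sub_intVec_mem_cube {d : ℕ} (x : Ed d) : ∃ k, x - intVec d k ∈ cube d 0 1 := by
  refine ⟨fun i => ⌊x i⌋, fun i => ?_⟩
  have h : (x - intVec d fun i => ⌊x i⌋) i = x i - ⌊x i⌋ := rfl
  rw [h]
  exact ⟨sub_nonneg.2 (Int.floor_le _), by linarith [Int.lt_floor_add_one (x i)]⟩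

namespace IsZdPeriodic

variable {d : ℕ} {u : Ed d → ℝ}

lemma apply_sub_intVec (hu : IsZdPeriodic u) (x : Ed d) (k : Fin d → ℤ) :
    u (x - intVec d k) = u x := by
  rw [← hu (x - intVec d k) k, sub_add_cancel]

lemma exists_abs_le (hu : IsZdPeriodic u) (hc : Continuous u) :
    ∃ M, 0 ≤ M ∧ ∀ x, |u x| ≤ M := by
  obtain ⟨M, hM⟩ := (isCompact_cube d 0 1).exists_bound_of_continuousOn hc.continuousOn
  refine ⟨max M 0, le_max_right _ _, fun x => ?_⟩
  obtain ⟨k, hk⟩ := exists_sub_intVec_mem_cube x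
  rw [← hu.apply_sub_intVec x k, ← Real.norm_eq_abs]
  exact (hM _ hk).trans (le_max_left _ _)

/-- Translating two close points by the same integer vector puts both in the compact box
`[-1, 2]^d`, on which `u` is uniformly continuous. -/
lemma uniformContinuous (hu : IsZdPeriodic u) (hc : Continuous u) : UniformContinuous u := by
  rw [Metric.uniformContinuous_iff]
  intro ε hε
  obtain ⟨r, hr, hur⟩ := Metric.uniformContinuousOn_iff.1
    ((isCompact_cube d (-1) 2).uniformContinuousOn_of_continuous hc.continuousOn) ε hε
  refine ⟨min r 1, by positivity, fun {x y} hxy => ?_⟩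
  obtain ⟨k, hk⟩ := exists_sub_intVec_mem_cube x
  have hx : x - intVec d k ∈ cube d (-1) 2 := fun i =>
    ⟨by linarith [(hk i).1], by linarith [(hk i).2]⟩
  have hy : y - intVec d k ∈ cube d (-1) 2 := by
    intro i
    have hi : |(x - intVec d k) i - (y - intVec d k) i| ≤ 1 := by
      rw [← Real.dist_eq]
      refine (PiLp.dist_apply_le _ _ i).trans ?_
      rw [dist_sub_right]
      exact hxy.le.trans (min_le_right _ _)
    obtain ⟨h1, h2⟩ := abs_le.1 hi
    exact ⟨by linarith [(hk i).1], by linarith [(hk i).2]⟩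
  have hd : dist (x - intVec d k) (y - intVec d k) < r := by
    rw [dist_sub_right]
    exact hxy.trans_le (min_le_left _ _)
  simpa only [hu.apply_sub_intVec] using hur _ hx _ hy hd

end IsZdPeriodic

section Calculus

variable {E : Type*} [NormedAddCommGroup E] [NormedSpace ℝ E] {f : ℝ → E} {a b : ℝ}

lemma ContDiffOn.exists_bound_deriv_Ioo (hf : ContDiffOn ℝ 1 f (Icc a b)) :
    ∃ C, ∀ s ∈ Ioo a b, DifferentiableAt ℝ f s ∧ ‖deriv f s‖ ≤ C := by
  rcases lt_or_ge a b with hab | hba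
  · obtain ⟨C, hC⟩ := isCompact_Icc.exists_bound_of_continuousOn
      (hf.continuousOn_derivWithin (uniqueDiffOn_Icc hab) le_rfl)
    refine ⟨C, fun s hs => ?_⟩
    have hnhds : Icc a b ∈ 𝓝 s := Icc_mem_nhds hs.1 hs.2
    refine ⟨(hf.differentiableOn one_ne_zero s (Ioo_subset_Icc_self hs)).differentiableAt hnhds,
      ?_⟩
    rw [← derivWithin_of_mem_nhds hnhds]
    exact hC s (Ioo_subset_Icc_self hs)
  · exact ⟨0, fun s hs => absurd (hs.1.trans hs.2) hba.not_gt⟩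

lemma ae_restrict_Ioc_mem_Ioo_diff {S : Set ℝ} (hS : S.Countable) :
    ∀ᵐ s ∂volume.restrict (Ioc a b), s ∈ Ioo a b \ S := by
  have hnull : volume (insert b S) = 0 := (hS.insert b).measure_zero volume
  filter_upwards [ae_restrict_of_ae (measure_eq_zero_iff_ae_notMem.1 hnull),
    ae_restrict_mem measurableSet_Ioc] with s hsS hs
  exact ⟨⟨hs.1, hs.2.lt_of_ne fun h => hsS (.inl h)⟩, fun h => hsS (.inr h)⟩

/-- Off a countable set the velocity stays in a ball, so `(f, f')` stays a.e. in a compact set. -/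
lemma intervalIntegrable_comp_deriv [FiniteDimensional ℝ E] {G : Type*} [NormedAddCommGroup G]
    {F : E × E → G} (hF : Continuous F) (hab : a ≤ b) (hf : ContinuousOn f (Icc a b))
    {S : Set ℝ} (hS : S.Countable) {C : ℝ} (hC : ∀ s ∈ Ioo a b \ S, ‖deriv f s‖ ≤ C) :
    IntervalIntegrable (fun s => F (f s, deriv f s)) volume a b := by
  obtain ⟨M, hM⟩ := ((isCompact_Icc.image_of_continuousOn hf).prod
    (isCompact_closedBall (0 : E) C)).exists_bound_of_continuousOn hF.continuousOn
  rw [intervalIntegrable_iff_integrableOn_Ioc_of_le hab]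
  have hmeas : AEStronglyMeasurable (fun s => F (f s, deriv f s)) (volume.restrict (Ioc a b)) :=
    hF.comp_aestronglyMeasurable
      (((hf.mono Ioc_subset_Icc_self).aestronglyMeasurable measurableSet_Ioc).prodMk
        (aestronglyMeasurable_deriv f _))
  refine IntegrableOn.of_bound measure_Ioc_lt_top hmeas M ?_
  filter_upwards [ae_restrict_Ioc_mem_Ioo_diff hS] with s hs
  exact hM _
    ⟨mem_image_of_mem f (Ioo_subset_Icc_self hs.1), mem_closedBall_zero_iff.2 (hC s hs)⟩

lemma norm_sub_le_integral_norm_deriv [CompleteSpace E] (hab : a ≤ b)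
    (hf : ContinuousOn f (Icc a b)) {S : Set ℝ} (hS : S.Countable)
    (hdiff : ∀ s ∈ Ioo a b \ S, DifferentiableAt ℝ f s)
    (hint : IntervalIntegrable (deriv f) volume a b) :
    ‖f b - f a‖ ≤ ∫ s in a..b, ‖deriv f s‖ := by
  rw [← integral_eq_of_hasDerivAt_off_countable_of_le f (deriv f) hab hS hf
    (fun s hs => (hdiff s hs).hasDerivAt) hint]
  exact intervalIntegral.norm_integral_le_integral_norm hab

end Calculus

namespace PiecewiseC1On

variable {d : ℕ} {γ : ℝ → Ed d} {a b : ℝ}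

lemma exists_finite_bound_deriv (hγ : PiecewiseC1On γ a b) :
    ∃ S : Set ℝ, S.Finite ∧
      ∃ C, ∀ s ∈ Ioo a b \ S, DifferentiableAt ℝ γ s ∧ ‖deriv γ s‖ ≤ C := by
  obtain ⟨-, n, T, hT0, hTn, -, hT⟩ := hγ
  choose C hC using fun i => (hT i).exists_bound_deriv_Ioo
  obtain ⟨C', hC'⟩ := Finite.exists_le C
  refine ⟨range T, finite_range T, C', fun s ⟨hs, hsT⟩ => ?_⟩
  set t : ℕ → ℝ := fun k => T ⟨min k n, by omega⟩
  have ht0 : t 0 = a := by simp [t, ← hT0]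
  have htn : t n = b := by simp [t, ← hTn, Fin.last]
  have hcover := Ico_subset_biUnion_Ico n t (by rw [ht0, htn]; exact Ioo_subset_Ico_self hs)
  simp only [Finset.mem_range, mem_iUnion] at hcover
  obtain ⟨k, hk, hsk⟩ := hcover
  set i : Fin n := ⟨k, hk⟩
  have hlo : t k = T i.castSucc := by simp [t, i, Nat.min_eq_left hk.le]
  have hhi : t (k + 1) = T i.succ := by simp [t, i, Nat.min_eq_left hk]
  rw [hlo, hhi] at hsk
  obtain ⟨hdiff, hbound⟩ := hC i s ⟨hsk.1.lt_of_ne fun h => hsT ⟨_, h⟩, hsk.2⟩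
  exact ⟨hdiff, hbound.trans (hC' i)⟩

lemma intervalIntegrable_comp (hγ : PiecewiseC1On γ a b) (hab : a ≤ b) {G : Type*}
    [NormedAddCommGroup G] {F : Ed d × Ed d → G} (hF : Continuous F) :
    IntervalIntegrable (fun s => F (γ s, deriv γ s)) volume a b := by
  obtain ⟨S, hS, C, hC⟩ := hγ.exists_finite_bound_deriv
  exact intervalIntegrable_comp_deriv hF hab hγ.1 hS.countable fun s hs => (hC s hs).2

lemma norm_sub_le_integral_norm_deriv (hγ : PiecewiseC1On γ a b) (hab : a ≤ b) :
    ‖γ b - γ a‖ ≤ ∫ s in a..b, ‖deriv γ s‖ := by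
  obtain ⟨S, hS, C, hC⟩ := hγ.exists_finite_bound_deriv
  exact _root_.norm_sub_le_integral_norm_deriv hab hγ.1 hS.countable (fun s hs => (hC s hs).1)
    (hγ.intervalIntegrable_comp hab continuous_snd)

lemma mul_norm_sub_sub_le_actionA (hγ : PiecewiseC1On γ a b) (hab : a ≤ b)
    {La : Ed d → Ed d → ℝ} (hLa : Continuous fun p : Ed d × Ed d => La p.1 p.2) {A B : ℝ}
    (hA : 0 ≤ A) (hAB : ∀ x v, A * ‖v‖ - B ≤ La x v) :
    A * ‖γ b - γ a‖ - B * (b - a) ≤ actionA La γ a b := by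
  have hnorm : IntervalIntegrable (fun s => ‖deriv γ s‖) volume a b :=
    hγ.intervalIntegrable_comp hab (F := fun p => ‖p.2‖) (by fun_prop)
  calc A * ‖γ b - γ a‖ - B * (b - a)
      ≤ A * (∫ s in a..b, ‖deriv γ s‖) - B * (b - a) := by
        gcongr
        exact hγ.norm_sub_le_integral_norm_deriv hab
    _ = ∫ s in a..b, (A * ‖deriv γ s‖ - B) := by
        rw [intervalIntegral.integral_sub (hnorm.const_mul A) intervalIntegrable_const,
          intervalIntegral.integral_const_mul, intervalIntegral.integral_const, smul_eq_mul,
          mul_comm B]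
    _ ≤ actionA La γ a b :=
        intervalIntegral.integral_mono_on hab ((hnorm.const_mul A).sub intervalIntegrable_const)
          (hγ.intervalIntegrable_comp hab hLa) fun s _ => hAB (γ s) (deriv γ s)

end PiecewiseC1On

section LaxOleinik

variable {d : ℕ} {La : Ed d → Ed d → ℝ} {u : Ed d → ℝ}

lemma piecewiseC1On_const (x : Ed d) {a b : ℝ} (hab : a ≤ b) :
    PiecewiseC1On (fun _ => x) a b :=
  ⟨continuousOn_const, 1, ![a, b], rfl, rfl, Fin.monotone_iff_le_succ.2 (by simpa using hab),
    fun _ => contDiffOn_const⟩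

lemma actionA_const (La : Ed d → Ed d → ℝ) (x : Ed d) (a b : ℝ) :
    actionA La (fun _ => x) a b = (b - a) * La x 0 := by
  simp [actionA]

lemma exists_sub_le_add_actionA (hLa : Continuous fun p : Ed d × Ed d => La p.1 p.2)
    (hsuper : ∀ A : ℝ, 0 ≤ A → ∃ B : ℝ, ∀ x v : Ed d, A * ‖v‖ - B ≤ La x v)
    {M : ℝ} (hM : ∀ x, |u x| ≤ M) (huc : UniformContinuous u) {ε : ℝ} (hε : 0 < ε) :
    ∃ B, 0 ≤ B ∧ ∀ {γ : ℝ → Ed d} {a b : ℝ}, PiecewiseC1On γ a b → a ≤ b →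
      u (γ b) - ε - B * (b - a) ≤ u (γ a) + actionA La γ a b := by
  have hM0 : 0 ≤ M := (abs_nonneg _).trans (hM 0)
  obtain ⟨r, hr, hur⟩ := Metric.uniformContinuous_iff.1 huc ε hε
  obtain ⟨B, hB⟩ := hsuper (2 * M / r) (by positivity)
  refine ⟨max B 0, le_max_right _ _, fun {γ a b} hγ hab => ?_⟩
  have hact := hγ.mul_norm_sub_sub_le_actionA hab hLa (by positivity) hB
  have hB' : B * (b - a) ≤ max B 0 * (b - a) :=
    mul_le_mul_of_nonneg_right (le_max_left _ _) (sub_nonneg.2 hab)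
  rw [← dist_eq_norm] at hact
  rcases lt_or_ge (dist (γ b) (γ a)) r with hclose | hfar
  · have hu_close := abs_lt.1 (Real.dist_eq _ _ ▸ hur hclose)
    have : 0 ≤ 2 * M / r * dist (γ b) (γ a) := by positivity
    linarith
  · have hpay : 2 * M ≤ 2 * M / r * dist (γ b) (γ a) := by
      calc 2 * M = 2 * M / r * r := by field_simp
        _ ≤ 2 * M / r * dist (γ b) (γ a) := by gcongr
    linarith [abs_le.1 (hM (γ a)), abs_le.1 (hM (γ b))]

lemma LOa_bounds {σ : ℝ} {x : Ed d} {c : ℝ} (hσ : 0 < σ)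
    (h : ∀ γ, PiecewiseC1On γ 0 σ → γ σ = x → c ≤ u (γ 0) + actionA La γ 0 σ) :
    c ≤ LOa La u σ x ∧ LOa La u σ x ≤ u x + σ * La x 0 := by
  rw [LOa, if_neg hσ.ne']
  refine ⟨le_csInf ⟨_, ?mem⟩ ?low, csInf_le ⟨c, ?low⟩ ?mem⟩
  case mem =>
    exact ⟨fun _ => x, piecewiseC1On_const x hσ.le, rfl, by rw [actionA_const, sub_zero]⟩
  case low =>
    rintro _ ⟨γ, hγ, hγx, rfl⟩
    exact h γ hγ hγx

lemma LOnew_bounds {t : ℝ} {x : Ed d} {c : ℝ} (ht : 0 ≤ t)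
    (h : ∀ σ, t ≤ σ → σ ≤ 2 * t → c ≤ LOa La u σ x) :
    c ≤ LOnew La u t x ∧ LOnew La u t x ≤ LOa La u t x := by
  rw [LOnew]
  refine ⟨le_csInf ⟨_, ?mem⟩ ?low, csInf_le ⟨c, ?low⟩ ?mem⟩
  case mem => exact ⟨t, le_rfl, by linarith, rfl⟩
  case low =>
    rintro _ ⟨σ, hσ₁, hσ₂, rfl⟩
    exact h σ hσ₁ hσ₂

end LaxOleinik

theorem LOnew_tendsto_id_general
    {d : ℕ} (La : Ed d → Ed d → ℝ) (hLa : TonelliAut La)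
    (u : Ed d → ℝ) (hu : Continuous u) (huper : IsZdPeriodic u) :
    ∀ ε : ℝ, 0 < ε → ∃ δ : ℝ, 0 < δ ∧ ∀ t : ℝ, 0 < t → t < δ →
      ∀ x : Ed d, |LOnew La u t x - u x| < ε := by
  intro ε hε
  obtain ⟨hsmooth, hper, -, hsuper⟩ := hLa
  obtain ⟨M, -, hM⟩ := huper.exists_abs_le hu
  obtain ⟨B, hB0, hB⟩ := exists_sub_le_add_actionA hsmooth.continuous hsuper hM
    (huper.uniformContinuous hu) (half_pos hε)
  obtain ⟨C, hC0, hC⟩ := IsZdPeriodic.exists_abs_le (u := fun x => La x 0)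
    (fun x k => hper x 0 k) (hsmooth.continuous.comp (continuous_id.prodMk continuous_const))
  refine ⟨ε / (4 * (B + C + 1)), by positivity, fun t ht htδ x => ?_⟩
  have hδ : 4 * (B + C + 1) * t < ε := (lt_div_iff₀' (by positivity)).1 htδ
  have hLOa σ (hσ : 0 < σ) := LOa_bounds (La := La) (u := u) (x := x) hσ
    fun γ hγ hγx => hγx ▸ sub_zero σ ▸ hB hγ hσ.le
  obtain ⟨hlo, hhi⟩ := LOnew_bounds (c := u x - ε / 2 - B * (2 * t)) ht.le fun σ htσ hσt =>
    (hLOa σ (ht.trans_le htσ)).1.trans' (by gcongr)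
  have hLa_x : t * La x 0 ≤ t * C := by gcongr; exact (le_abs_self _).trans (hC x)
  rw [abs_sub_lt_iff]
  constructor <;> nlinarith [(hLOa t ht).2]

/-- `T̃ᵃ_t u` converges uniformly to `u` as `t → 0⁺`. -/
theorem LOnew_tendsto_id
    {d : ℕ} (hd : 1 ≤ d) (La : Ed d → Ed d → ℝ) (hLa : TonelliAut La)
    (u : Ed d → ℝ) (hu : Continuous u) (huper : IsZdPeriodic u) :
    ∀ ε : ℝ, 0 < ε → ∃ δ : ℝ, 0 < δ ∧ ∀ t : ℝ, 0 < t → t < δ →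
      ∀ x : Ed d, |LOnew La u t x - u x| < ε :=
  LOnew_tendsto_id_general La hLa u hu huper
end
end

section
/- Let u : ℝ^d → ℝ be continuous and ℤ^d-periodic, and suppose that T^a_t u converges uniformly on ℝ^d as t → +∞ (to some continuous function). Then u is a fixed point of the new Lax–Oleinik semigroup (T̃^a_t u = u for all t ≥ 0) if and only if u is a fixed point of the Lax–Oleinik semigroup (T^a_t u = u for all t ≥ 0). -/
open Set Filter

noncomputable section

/-!
If `u` is a fixed point of `T̃ᵃ`, then `u = T̃ᵃ_t u ≤ Tᵃ_t u` for every `t`, so every curve `γ` on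
`[0, c]` satisfies `u (γ c) ≤ u (γ 0) + ∫₀ᶜ La(γ, γ')`. Splitting a curve on `[0, σ]` at time `σ - t`
then gives `Tᵃ_t u ≤ Tᵃ_σ u` for `t ≤ σ`; the infimum defining `T̃ᵃ_t u` is therefore attained at
`σ = t`, whence `Tᵃ_t u = T̃ᵃ_t u = u`. Conversely, if `Tᵃ_σ u = u` for all `σ`, the infimum
over `σ ∈ [t, 2t]` is `u`.
-/

open MeasureTheory

theorem Set.Subsingleton.contDiffOn {𝕜 E F : Type*} [NontriviallyNormedField 𝕜]
    [NormedAddCommGroup E] [NormedSpace 𝕜 E] [NormedAddCommGroup F] [NormedSpace 𝕜 F]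
    {s : Set E} (hs : s.Subsingleton) (f : E → F) (n : WithTop ℕ∞) : ContDiffOn 𝕜 n f s := by
  intro x hx
  exact (contDiffOn_const (c := f x)).congr (fun y hy => by rw [hs hy hx]) x hx

namespace PiecewiseC1On

variable {d : ℕ} {γ : ℝ → Ed d} {a b : ℝ}

theorem const (x : Ed d) (hab : a ≤ b) : PiecewiseC1On (fun _ => x) a b := by
  refine ⟨continuousOn_const, 1, ![a, b], rfl, rfl, ?_, fun _ => contDiffOn_const⟩
  intro i j hij
  fin_cases i <;> fin_cases j <;> simp_all

theorem mono (hγ : PiecewiseC1On γ a b) {a' b' : ℝ} (ha : a ≤ a') (hab : a' ≤ b') (hb : b' ≤ b) :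
    PiecewiseC1On γ a' b' := by
  obtain ⟨hcont, n, T, hT0, hTn, hT, hpiece⟩ := hγ
  have clamp_mono : Monotone fun s : ℝ => max a' (min s b') :=
    fun s s' h => max_le_max le_rfl (min_le_min h le_rfl)
  refine ⟨hcont.mono (Icc_subset_Icc ha hb), n, fun i => max a' (min (T i) b'),
    by simp [hT0, ha], by simp [hTn, hb, hab], clamp_mono.comp hT, fun i => ?_⟩
  rcases lt_or_ge (max a' (min (T i.castSucc) b')) (max a' (min (T i.succ) b')) with hlt | hge
  -- a nondegenerate clamped piece lies inside the original piece
  · exact (hpiece i).mono (Icc_subset_Icc (by grind) (by grind))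
  · exact (Set.subsingleton_Icc_of_ge hge).contDiffOn γ 1

theorem comp_add_const (hγ : PiecewiseC1On γ a b) (c : ℝ) :
    PiecewiseC1On (fun s => γ (s + c)) (a - c) (b - c) := by
  obtain ⟨hcont, n, T, hT0, hTn, hT, hpiece⟩ := hγ
  have hshift : ∀ p q : ℝ, MapsTo (· + c) (Icc (p - c) (q - c)) (Icc p q) :=
    fun p q s hs => ⟨by linarith [hs.1], by linarith [hs.2]⟩
  refine ⟨hcont.comp (continuous_add_const c).continuousOn (hshift a b), n, fun i => T i - c,
    by simp [hT0], by simp [hTn], fun i j h => by simpa using hT h, fun i => ?_⟩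
  exact (hpiece i).comp (contDiff_id.add contDiff_const).contDiffOn (hshift _ _)

end PiecewiseC1On

theorem ContDiffOn.intervalIntegrable_comp_deriv {d : ℕ} {F : Ed d → Ed d → ℝ}
    (hF : Continuous fun p : Ed d × Ed d => F p.1 p.2) {γ : ℝ → Ed d} {p q : ℝ}
    (hγ : ContDiffOn ℝ 1 γ (Icc p q)) (hpq : p ≤ q) :
    IntervalIntegrable (fun s => F (γ s) (deriv γ s)) volume p q := by
  rcases hpq.eq_or_lt with rfl | hlt
  · exact .refl
  have hderiv : ContinuousOn (derivWithin γ (Icc p q)) (Icc p q) :=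
    hγ.continuousOn_derivWithin (uniqueDiffOn_Icc hlt) le_rfl
  have hcont : ContinuousOn (fun s => F (γ s) (derivWithin γ (Icc p q) s)) (uIcc p q) := by
    rw [uIcc_of_le hpq]
    exact hF.comp_continuousOn (hγ.continuousOn.prodMk hderiv)
  refine hcont.intervalIntegrable.congr_uIoo fun s hs => ?_
  rw [uIoo_of_le hpq] at hs
  simp only [derivWithin_of_mem_nhds (Icc_mem_nhds hs.1 hs.2)]

theorem PiecewiseC1On.intervalIntegrable_comp_deriv {d : ℕ} {F : Ed d → Ed d → ℝ}
    (hF : Continuous fun p : Ed d × Ed d => F p.1 p.2) {γ : ℝ → Ed d} {a b : ℝ}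
    (hγ : PiecewiseC1On γ a b) :
    IntervalIntegrable (fun s => F (γ s) (deriv γ s)) volume a b := by
  obtain ⟨-, n, T, rfl, rfl, hT, hpiece⟩ := hγ
  suffices ∀ i : Fin (n + 1), IntervalIntegrable (fun s => F (γ s) (deriv γ s)) volume (T 0) (T i)
    from this (Fin.last n)
  intro i
  induction i using Fin.induction with
  | zero => exact .refl
  | succ i ih =>
    exact ih.trans ((hpiece i).intervalIntegrable_comp_deriv hF (hT (Fin.castSucc_le_succ i)))

theorem IsZdPeriodic.bddBelow_range {d : ℕ} {u : Ed d → ℝ} (huper : IsZdPeriodic u)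
    (hu : Continuous u) : BddBelow (range u) := by
  have hK : IsCompact (WithLp.toLp 2 '' Icc (0 : Fin d → ℝ) 1) :=
    isCompact_Icc.image (PiLp.continuous_toLp 2 _)
  refine (hK.bddBelow_image hu.continuousOn).mono ?_
  rintro _ ⟨x, rfl⟩
  set k : Fin d → ℤ := fun i => ⌊x i⌋
  refine ⟨x - intVec d k, ⟨fun i => Int.fract (x i), ⟨fun i => ?_, fun i => ?_⟩, ?_⟩, ?_⟩
  · exact Int.fract_nonneg (x i)
  · exact (Int.fract_lt_one (x i)).le
  · ext i; simp [k, intVec, Int.self_sub_floor]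
  · simpa using (huper (x - intVec d k) k).symm

section LaxOleinik

variable {d : ℕ} {La : Ed d → Ed d → ℝ} {u : Ed d → ℝ} {γ : ℝ → Ed d} {B m : ℝ}

theorem LOa_of_pos {t : ℝ} (ht : 0 < t) (x : Ed d) :
    LOa La u t x = sInf {r | ∃ γ : ℝ → Ed d, PiecewiseC1On γ 0 t ∧ γ t = x ∧
      r = u (γ 0) + actionA La γ 0 t} :=
  if_neg ht.ne'

theorem actionA_comp_add_const (c a b : ℝ) :
    actionA La (fun s => γ (s + c)) a b = actionA La γ (a + c) (b + c) := by
  simp only [actionA, deriv_comp_add_const]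
  exact intervalIntegral.integral_comp_add_right (fun s => La (γ s) (deriv γ s)) c

theorem actionA_add_actionA (hLa : Continuous fun p : Ed d × Ed d => La p.1 p.2) {a b c : ℝ}
    (hγ : PiecewiseC1On γ a c) (hab : a ≤ b) (hbc : b ≤ c) :
    actionA La γ a b + actionA La γ b c = actionA La γ a c :=
  intervalIntegral.integral_add_adjacent_intervals
    ((hγ.mono le_rfl hab hbc).intervalIntegrable_comp_deriv hLa)
    ((hγ.mono hab hbc le_rfl).intervalIntegrable_comp_deriv hLa)

theorem neg_mul_le_actionA (hLa : Continuous fun p : Ed d × Ed d => La p.1 p.2)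
    (hB : ∀ x v, -B ≤ La x v) {a b : ℝ} (hγ : PiecewiseC1On γ a b) (hab : a ≤ b) :
    -(B * (b - a)) ≤ actionA La γ a b := by
  have h := intervalIntegral.integral_mono_on hab intervalIntegrable_const
    (hγ.intervalIntegrable_comp_deriv hLa) fun s _ => hB (γ s) (deriv γ s)
  rw [intervalIntegral.integral_const, smul_eq_mul] at h
  unfold actionA
  linarith

theorem LOnew_eq_LOa_of_le {t : ℝ} (ht : 0 ≤ t) {x : Ed d}
    (hle : ∀ σ, t ≤ σ → σ ≤ 2 * t → LOa La u t x ≤ LOa La u σ x) :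
    LOnew La u t x = LOa La u t x := by
  have hmem : LOa La u t x ∈ {r | ∃ σ : ℝ, t ≤ σ ∧ σ ≤ 2 * t ∧ r = LOa La u σ x} :=
    ⟨t, le_rfl, by linarith, rfl⟩
  have hlower : LOa La u t x ∈
      lowerBounds {r | ∃ σ : ℝ, t ≤ σ ∧ σ ≤ 2 * t ∧ r = LOa La u σ x} := by
    rintro _ ⟨σ, htσ, hσ, rfl⟩
    exact hle σ htσ hσ
  exact le_antisymm (csInf_le ⟨_, hlower⟩ hmem) (le_csInf ⟨_, hmem⟩ hlower)

variable (hLa : Continuous fun p : Ed d × Ed d => La p.1 p.2) (hB : ∀ x v, -B ≤ La x v)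
  (hm : ∀ x, m ≤ u x)
include hLa hB hm

theorem sub_mul_le_add_actionA {t : ℝ} (hγ : PiecewiseC1On γ 0 t) (ht : 0 ≤ t) :
    m - B * t ≤ u (γ 0) + actionA La γ 0 t := by
  have := neg_mul_le_actionA hLa hB hγ ht
  linarith [hm (γ 0)]

theorem LOa_le_add_actionA {t : ℝ} (hγ : PiecewiseC1On γ 0 t) (ht : 0 ≤ t) :
    LOa La u t (γ t) ≤ u (γ 0) + actionA La γ 0 t := by
  rcases ht.eq_or_lt with rfl | hpos
  · simp [LOa, actionA]
  rw [LOa_of_pos hpos]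
  refine csInf_le ⟨m - B * t, ?_⟩ ⟨γ, hγ, rfl, rfl⟩
  rintro _ ⟨δ, hδ, -, rfl⟩
  exact sub_mul_le_add_actionA hLa hB hm hδ ht

theorem sub_mul_le_LOa {t : ℝ} (ht : 0 ≤ t) (x : Ed d) : m - B * t ≤ LOa La u t x := by
  rcases ht.eq_or_lt with rfl | hpos
  · simpa [LOa] using hm x
  rw [LOa_of_pos hpos]
  refine le_csInf ⟨_, fun _ => x, .const x ht, rfl, rfl⟩ ?_
  rintro _ ⟨γ, hγ, -, rfl⟩
  exact sub_mul_le_add_actionA hLa hB hm hγ ht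

theorem LOa_monotoneOn_of_le_LOa (hsub : ∀ t, 0 ≤ t → ∀ x, u x ≤ LOa La u t x) (x : Ed d) :
    MonotoneOn (fun t => LOa La u t x) (Ici 0) := by
  intro t ht σ hσ htσ
  rcases (show (0 : ℝ) ≤ σ from hσ).eq_or_lt with rfl | hσpos
  · rw [le_antisymm htσ ht]
  show LOa La u t x ≤ LOa La u σ x
  rw [LOa_of_pos hσpos]
  refine le_csInf ⟨_, fun _ => x, .const x hσ, rfl, rfl⟩ ?_
  rintro _ ⟨γ, hγ, rfl, rfl⟩
  set c := σ - t
  have hc : 0 ≤ c := sub_nonneg.2 htσ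
  have hcσ : c ≤ σ := sub_le_self σ ht
  have hδ : PiecewiseC1On (fun s => γ (s + c)) 0 t := by
    simpa [c] using (hγ.mono hc hcσ le_rfl).comp_add_const c
  calc LOa La u t (γ σ) = LOa La u t ((fun s => γ (s + c)) t) := by simp [c]
    _ ≤ u (γ c) + actionA La γ c σ := by
      simpa [actionA_comp_add_const, c] using LOa_le_add_actionA hLa hB hm hδ ht
    _ ≤ LOa La u c (γ c) + actionA La γ c σ := by gcongr; exact hsub c hc _
    _ ≤ u (γ 0) + actionA La γ 0 c + actionA La γ c σ := by
      gcongr; exact LOa_le_add_actionA hLa hB hm (hγ.mono le_rfl hc hcσ) hc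
    _ = u (γ 0) + actionA La γ 0 σ := by rw [add_assoc, actionA_add_actionA hLa hγ hc hcσ]

theorem LOnew_le_LOa (hB0 : 0 ≤ B) {t : ℝ} (ht : 0 ≤ t) (x : Ed d) :
    LOnew La u t x ≤ LOa La u t x := by
  refine csInf_le ⟨m - B * (2 * t), ?_⟩ ⟨t, le_rfl, by linarith, rfl⟩
  rintro _ ⟨σ, htσ, hσ, rfl⟩
  calc m - B * (2 * t) ≤ m - B * σ := by gcongr
    _ ≤ LOa La u σ x := sub_mul_le_LOa hLa hB hm (ht.trans htσ) x

end LaxOleinik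

theorem LOnew_fixed_iff_LOa_fixed_general
    {d : ℕ} (La : Ed d → Ed d → ℝ) (hLa : TonelliAut La)
    (u : Ed d → ℝ) (hu : Continuous u) (huper : IsZdPeriodic u) :
    (∀ t : ℝ, 0 ≤ t → ∀ x : Ed d, LOnew La u t x = u x) ↔
    (∀ t : ℝ, 0 ≤ t → ∀ x : Ed d, LOa La u t x = u x) := by
  obtain ⟨hC2, -, -, hsuper⟩ := hLa
  have hLaC : Continuous fun p : Ed d × Ed d => La p.1 p.2 := hC2.continuous
  obtain ⟨B, hB⟩ := hsuper 0 le_rfl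
  have hB' : ∀ x v, -|B| ≤ La x v := fun x v =>
    (neg_le_neg (le_abs_self B)).trans (by simpa using hB x v)
  obtain ⟨m, hm⟩ := huper.bddBelow_range hu
  have hm' : ∀ x, m ≤ u x := fun x => hm ⟨x, rfl⟩
  constructor
  · intro hnew
    have hsub : ∀ t, 0 ≤ t → ∀ x, u x ≤ LOa La u t x := fun t ht x =>
      hnew t ht x ▸ LOnew_le_LOa hLaC hB' hm' (abs_nonneg B) ht x
    intro t ht x
    rw [← hnew t ht x, LOnew_eq_LOa_of_le ht fun σ htσ _ =>
      LOa_monotoneOn_of_le_LOa hLaC hB' hm' hsub x ht (ht.trans htσ) htσ]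
  · intro hfix t ht x
    rw [LOnew_eq_LOa_of_le ht fun σ htσ _ =>
      ((hfix t ht x).trans (hfix σ (ht.trans htσ) x).symm).le, hfix t ht x]

/-- assuming `Tᵃ_t u` converges uniformly as `t → +∞`, `u` is a fixed
point of the new Lax–Oleinik semigroup iff it is a fixed point of the Lax–Oleinik
semigroup. -/
theorem LOnew_fixed_iff_LOa_fixed
    {d : ℕ} (hd : 1 ≤ d) (La : Ed d → Ed d → ℝ) (hLa : TonelliAut La)
    (u : Ed d → ℝ) (hu : Continuous u) (huper : IsZdPeriodic u)
    (hconv : ∃ ubar : Ed d → ℝ, Continuous ubar ∧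
      TendstoUniformly (fun (t : ℝ) (x : Ed d) => LOa La u t x) ubar Filter.atTop) :
    (∀ t : ℝ, 0 ≤ t → ∀ x : Ed d, LOnew La u t x = u x) ↔
    (∀ t : ℝ, 0 ≤ t → ∀ x : Ed d, LOa La u t x = u x) :=
  LOnew_fixed_iff_LOa_fixed_general La hLa u hu huper
end
end
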